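/- The lsv relation of lcbv is terminating: there is no infinite reduction sequence t0 →lsv t1 →lsv t2 →lsv ⋯. -/

import Mathlib

/-! ## Terms of the call-by-value lambda-calculus with explicit substitutions -/

inductive Term : Type
  | var : ℕ → Term
  | lam : ℕ → Term → Term
  | app : Term → Term → Term
  | es  : Term → ℕ → Term → Term
deriving DecidableEq

namespace Term

/-- Free variables. -/
def fv : Term → Finset ℕ
  | var x => {x}
  | lam x t => t.fv.erase x
  | app t u => t.fv ∪ u.fv
  | es t x u => t.fv.erase x ∪ u.fv

/-- Reachable variables. -/
def rv : Term → Finset ℕ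
  | var x => {x}
  | lam _ _ => ∅
  | app t u => t.rv ∪ u.rv
  | es t x u => t.rv.erase x ∪ u.rv

/-- Values: variables and abstractions. -/
inductive Value : Term → Prop
  | var (x : ℕ) : Value (var x)
  | lam (x : ℕ) (t : Term) : Value (lam x t)

end Term

/-- Substitution contexts `L ::= ◇ | L[x\t]`, represented as a list of
explicit substitutions, innermost first. -/
abbrev SubCtx := List (ℕ × Term)

/-- Plugging a term in the hole of a substitution context. -/
def plug (t : Term) : SubCtx → Term
  | [] => t
  | (x, u) :: L => plug (Term.es t x u) L

/-- Step kinds: `db`, `lsv`, and `[x\v]`. -/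
inductive Kind : Type
  | db : Kind
  | lsv : Kind
  | sub : ℕ → Term → Kind

/-- Free variables of a step kind. -/
def Kind.fv : Kind → Finset ℕ
  | db => ∅
  | lsv => ∅
  | sub x v => insert x v.fv

/-! ## The linear CBV strategy (lcbv) -/

inductive LStep : Kind → Term → Term → Prop
  | db (x : ℕ) (t : Term) (L : SubCtx) (u : Term) :
      LStep .db (.app (plug (.lam x t) L) u) (plug (.es t x u) L)
  | sub (x : ℕ) (v : Term) : v.Value → x ∉ v.fv →
      LStep (.sub x v) (.var x) v
  | lsv {t t' : Term} (x : ℕ) (v : Term) (L : SubCtx) :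
      LStep (.sub x v) t t' →
      LStep .lsv (.es t x (plug v L)) (plug (.es t' x v) L)
  | appL {ρ t t'} (u) : LStep ρ t t' → LStep ρ (.app t u) (.app t' u)
  | appR {ρ u u'} (t) : LStep ρ u u' → LStep ρ (.app t u) (.app t u')
  | esL {ρ t t'} (x u) : x ∉ ρ.fv → LStep ρ t t' →
      LStep ρ (.es t x u) (.es t' x u)
  | esR {ρ u u'} (t x) : LStep ρ u u' → LStep ρ (.es t x u) (.es t x u')

/-- Top-level lcbv reduction `→Vtop := →db ∪ →lsv`. -/
def LTop (t u : Term) : Prop := LStep .db t u ∨ LStep .lsv t u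

/-! ## Hereditary abstractions and structures -/

inductive HAbs : Finset ℕ → Term → Prop
  | lam (A : Finset ℕ) (x t) : HAbs A (.lam x t)
  | var {A : Finset ℕ} {x} : x ∈ A → HAbs A (.var x)
  | sub1 {A t} (x u) : HAbs A t → x ∉ A → HAbs A (.es t x u)
  | sub2 {A t x u} : HAbs (insert x A) t → x ∉ A → HAbs A u →
      HAbs A (.es t x u)

inductive Struct : Finset ℕ → Term → Prop
  | var {S : Finset ℕ} {x} : x ∈ S → Struct S (.var x)
  | app {S t} (u) : Struct S t → Struct S (.app t u)
  | sub1 {S t} (x u) : Struct S t → x ∉ S → Struct S (.es t x u)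
  | sub2 {S t x u} : Struct (insert x S) t → x ∉ S → Struct S u →
      Struct S (.es t x u)

/-- Positional flags: applied `@` (`ap`) and non-applied `¬@` (`nap`). -/
inductive PFlag : Type
  | ap : PFlag
  | nap : PFlag
deriving DecidableEq

/-! ## The useful CBV strategy (ucbv) -/

inductive UStep : Kind → Finset ℕ → Finset ℕ → PFlag → Term → Term → Prop
  | db {A S μ} (x t L u) :
      UStep .db A S μ (.app (plug (.lam x t) L) u) (plug (.es t x u) L)
  | sub {A S : Finset ℕ} {x v} : x ∈ A → v.Value → x ∉ v.fv →
      UStep (.sub x v) A S .ap (.var x) v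
  | lsv {A S μ t t' x v} (L) :
      UStep (.sub x v) (insert x A) S μ t t' →
      x ∉ A ∪ S → HAbs A (plug v L) →
      UStep .lsv A S μ (.es t x (plug v L)) (plug (.es t' x v) L)
  | appL {ρ A S μ t t'} (u) :
      UStep ρ A S .ap t t' → UStep ρ A S μ (.app t u) (.app t' u)
  | appR {ρ A S μ t u u'} :
      Struct S t → UStep ρ A S .nap u u' →
      UStep ρ A S μ (.app t u) (.app t u')
  | esR {ρ A S μ u u'} (t x) :
      UStep ρ A S .nap u u' → UStep ρ A S μ (.es t x u) (.es t x u')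
  | esLA {ρ A S μ t t' x u} :
      UStep ρ (insert x A) S μ t t' → HAbs A u → x ∉ A ∪ S → x ∉ ρ.fv →
      UStep ρ A S μ (.es t x u) (.es t' x u)
  | esLS {ρ A S μ t t' x u} :
      UStep ρ A (insert x S) μ t t' → Struct S u → x ∉ A ∪ S → x ∉ ρ.fv →
      UStep ρ A S μ (.es t x u) (.es t' x u)

/-- Inductive characterisation of ucbv normal forms. -/
inductive NF : Finset ℕ → Finset ℕ → PFlag → Term → Prop
  | var {A S : Finset ℕ} {μ x} : (x ∈ A → μ = .nap) → NF A S μ (.var x)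
  | lam {A S : Finset ℕ} (x t) : NF A S .nap (.lam x t)
  | app {A S μ t u} : NF A S .ap t → NF A S .nap u → NF A S μ (.app t u)
  | esA {A S μ t x u} : NF (insert x A) S μ t → NF A S .nap u → HAbs A u →
      NF A S μ (.es t x u)
  | esS {A S μ t x u} : NF A (insert x S) μ t → NF A S .nap u → Struct S u →
      NF A S μ (.es t x u)

/-- Correctness of the frames `(A, S)` for `t`: `inv(A,S,t)`. -/
def Correct (A S : Finset ℕ) (t : Term) : Prop :=
  A ∩ S = ∅ ∧ t.fv ⊆ A ∪ S

/-- Top-level ucbv reduction `→S_top := →db[∅,S,¬@] ∪ →lsv[∅,S,¬@]`. -/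
def UTop (S : Finset ℕ) (t u : Term) : Prop :=
  UStep .db ∅ S .nap t u ∨ UStep .lsv ∅ S .nap t u

/-- Top-level ucbv reduction sequences counting `m` db-steps and `e` lsv-steps. -/
inductive UTopSeq (S : Finset ℕ) : Term → Term → ℕ → ℕ → Prop
  | refl (t) : UTopSeq S t t 0 0
  | db {t t' u m e} : UStep .db ∅ S .nap t t' → UTopSeq S t' u m e →
      UTopSeq S t u (m + 1) e
  | lsv {t t' u m e} : UStep .lsv ∅ S .nap t t' → UTopSeq S t' u m e →
      UTopSeq S t u m (e + 1)


/-! ### Auxiliary measures for termination of `lsv` -/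

/-- Number of reachable variable occurrences. -/
def nsize : Term → ℕ
  | .var _ => 1
  | .lam _ _ => 0
  | .app t u => nsize t + nsize u
  | .es t _ u => nsize t + nsize u

/-- Argument-nesting weight: each `es` node weighs its argument-depth. -/
def dsize : ℕ → Term → ℕ
  | _, .var _ => 0
  | _, .lam _ _ => 0
  | k, .app t u => dsize k t + dsize k u
  | k, .es t _ u => k + dsize k t + dsize (k+1) u

/-- Binder-depth weight: each reachable occurrence weighs the `es`-depth of
its binder (plus one), free variables weigh the value given by the env. -/
def rsize : (ℕ → ℕ) → ℕ → Term → ℕ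
  | g, _, .var z => g z
  | _, _, .lam _ _ => 0
  | g, d, .app t u => rsize g d t + rsize g d u
  | g, d, .es t x u => rsize (fun z => if z = x then d+1 else g z) (d+1) t + rsize g (d+1) u

lemma dsize_mono : ∀ (t : Term) {k k' : ℕ}, k ≤ k' → dsize k t ≤ dsize k' t := by
  intro t
  induction t with
  | var z => intro k k' h; simp [dsize]
  | lam x t ih => intro k k' h; simp [dsize]
  | app t u iht ihu => intro k k' h; simp only [dsize]; exact Nat.add_le_add (iht h) (ihu h)
  | es t x u iht ihu =>
      intro k k' h; simp only [dsize]
      exact Nat.add_le_add (Nat.add_le_add h (iht h)) (ihu (Nat.succ_le_succ h))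

lemma nsize_plug : ∀ (L : SubCtx) (s : Term),
    nsize (plug s L) = nsize s + (L.map (fun p => nsize p.2)).sum := by
  intro L
  induction L with
  | nil => intro s; simp [plug]
  | cons p L ih =>
      intro s
      obtain ⟨y, u⟩ := p
      simp [plug, ih, nsize]
      omega

lemma dsize_plug : ∀ (L : SubCtx) (s : Term) (k : ℕ),
    dsize k (plug s L) =
      L.length * k + dsize k s + (L.map (fun p => dsize (k+1) p.2)).sum := by
  intro L
  induction L with
  | nil => intro s k; simp [plug]
  | cons p L ih =>
      intro s k
      obtain ⟨y, u⟩ := p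
      simp [plug, ih, dsize]
      ring

/-- Facts about a `sub`-step: it replaces exactly one reachable occurrence of
`x` by the value `v`, which decreases the measures suitably. -/
lemma sub_facts : ∀ {ρ : Kind} {t t' : Term}, LStep ρ t t' → ∀ (x : ℕ) (v : Term),
    ρ = .sub x v →
      v.Value ∧ x ∉ v.fv ∧ nsize t' + 1 = nsize t + nsize v ∧
      ∀ y : ℕ, v = .var y →
        (∀ k, dsize k t' = dsize k t) ∧
        (∀ (g : ℕ → ℕ) (d : ℕ), (∀ z, g z ≤ d) → g y < g x →
          rsize g d t' < rsize g d t) := by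
  intro ρ t t' h
  induction h with
  | db x t L u => intro x' v' heq; exact Kind.noConfusion heq
  | sub x v hv hfv =>
      intro x' v' heq
      cases heq
      refine ⟨hv, hfv, by simp [nsize]; omega, ?_⟩
      rintro y rfl
      refine ⟨fun k => by simp [dsize], ?_⟩
      intro g d _ hlt
      simpa [rsize] using hlt
  | lsv x v L h ih => intro x' v' heq; exact Kind.noConfusion heq
  | appL u h ih =>
      intro x v heq
      obtain ⟨hv, hfv, hN, hrest⟩ := ih x v heq
      refine ⟨hv, hfv, by simp [nsize]; omega, ?_⟩
      rintro y rfl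
      obtain ⟨hD, hR⟩ := hrest y rfl
      refine ⟨fun k => by simp [dsize, hD], ?_⟩
      intro g d hg hlt
      have := hR g d hg hlt
      simp only [rsize]
      omega
  | appR t h ih =>
      intro x v heq
      obtain ⟨hv, hfv, hN, hrest⟩ := ih x v heq
      refine ⟨hv, hfv, by simp [nsize]; omega, ?_⟩
      rintro y rfl
      obtain ⟨hD, hR⟩ := hrest y rfl
      refine ⟨fun k => by simp [dsize, hD], ?_⟩
      intro g d hg hlt
      have := hR g d hg hlt
      simp only [rsize]
      omega
  | esL z u hz h ih =>
      intro x v heq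
      obtain ⟨hv, hfv, hN, hrest⟩ := ih x v heq
      subst heq
      refine ⟨hv, hfv, by simp [nsize]; omega, ?_⟩
      rintro y rfl
      obtain ⟨hD, hR⟩ := hrest y rfl
      refine ⟨fun k => by simp [dsize, hD], ?_⟩
      intro g d hg hlt
      -- z ∉ fv (sub x (var y)) = insert x {y}
      simp only [Kind.fv, Term.fv, Finset.mem_insert, Finset.mem_singleton] at hz
      push_neg at hz
      obtain ⟨hzx, hzy⟩ := hz
      have hbound : ∀ w, (fun w => if w = z then d+1 else g w) w ≤ d + 1 := by
        intro w
        by_cases hw : w = z <;> simp [hw]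
        exact le_trans (hg w) (Nat.le_succ d)
      have hlt' : (fun w => if w = z then d+1 else g w) y < (fun w => if w = z then d+1 else g w) x := by
        simp [Ne.symm hzy, Ne.symm hzx]
        exact hlt
      have := hR _ (d+1) hbound hlt'
      simp only [rsize]
      omega
  | esR t z h ih =>
      intro x v heq
      obtain ⟨hv, hfv, hN, hrest⟩ := ih x v heq
      refine ⟨hv, hfv, by simp [nsize]; omega, ?_⟩
      rintro y rfl
      obtain ⟨hD, hR⟩ := hrest y rfl
      refine ⟨fun k => by simp [dsize, hD], ?_⟩
      intro g d hg hlt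
      have := hR g (d+1) (fun z => le_trans (hg z) (Nat.le_succ d)) hlt
      simp only [rsize]
      omega

/-- Every `lsv`-step strictly decreases the lexicographic measure
`(nsize, dsize 0, rsize 0 0)`. -/
lemma lsv_dec : ∀ {ρ : Kind} {s s' : Term}, LStep ρ s s' → ρ = .lsv →
    nsize s' < nsize s ∨
    (nsize s' = nsize s ∧
      ((∀ k, dsize k s' < dsize k s) ∨
       ((∀ k, dsize k s' = dsize k s) ∧
        ∀ (g : ℕ → ℕ) (d : ℕ), (∀ z, g z ≤ d) → rsize g d s' < rsize g d s))) := by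
  intro ρ s s' h
  induction h with
  | db x t L u => intro heq; exact Kind.noConfusion heq
  | sub x v hv hfv => intro heq; exact Kind.noConfusion heq
  | @lsv t t' x v L hsub _ =>
      intro _
      obtain ⟨hv, hfv, hN, hrest⟩ := sub_facts hsub x v rfl
      cases hv with
      | lam a b =>
          left
          simp only [nsize_plug, nsize] at hN ⊢
          omega
      | var y =>
          right
          obtain ⟨hD, hR⟩ := hrest y rfl
          have hNeq : nsize t' = nsize t := by simp [nsize] at hN; omega
          constructor
          · simp only [nsize_plug, nsize, hNeq]; omega
          · cases L with
            | nil =>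
                right
                constructor
                · intro k
                  simp [plug, dsize, hD]
                · intro g d hg
                  simp only [plug, rsize]
                  have hxy : x ≠ y := by
                    simp [Term.fv] at hfv; exact hfv
                  have hbound : ∀ w, (fun w => if w = x then d+1 else g w) w ≤ d + 1 := by
                    intro w
                    by_cases hw : w = x <;> simp [hw]
                    exact le_trans (hg w) (Nat.le_succ d)
                  have hlt : (fun w => if w = x then d+1 else g w) y < (fun w => if w = x then d+1 else g w) x := by
                    simp [Ne.symm hxy]
                    exact hg y
                  have := hR _ (d+1) hbound hlt
                  omega
            | cons p L' =>
                left
                intro k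
                simp only [dsize_plug, dsize, hD]
                have hmono : ((p :: L').map (fun q => dsize (k+1) q.2)).sum ≤
                    ((p :: L').map (fun q => dsize (k+1+1) q.2)).sum := by
                  apply List.sum_le_sum
                  intro q _
                  exact dsize_mono q.2 (by omega)
                have hlen : 1 ≤ (p :: L').length := by simp
                have hexp : (p :: L').length * (k+1) = (p :: L').length * k + (p :: L').length := by
                  ring
                linarith
  | appL u h ih =>
      intro heq
      obtain h1 | ⟨h1, h2⟩ := ih heq
      · left; simp only [nsize]; omega
      · right
        refine ⟨by simp only [nsize]; omega, ?_⟩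
        obtain h2 | ⟨h2, h3⟩ := h2
        · left; intro k; simp only [dsize]; have := h2 k; omega
        · right
          refine ⟨fun k => by simp only [dsize]; have := h2 k; omega, ?_⟩
          intro g d hg
          have := h3 g d hg
          simp only [rsize]
          omega
  | appR t h ih =>
      intro heq
      obtain h1 | ⟨h1, h2⟩ := ih heq
      · left; simp only [nsize]; omega
      · right
        refine ⟨by simp only [nsize]; omega, ?_⟩
        obtain h2 | ⟨h2, h3⟩ := h2
        · left; intro k; simp only [dsize]; have := h2 k; omega
        · right
          refine ⟨fun k => by simp only [dsize]; have := h2 k; omega, ?_⟩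
          intro g d hg
          have := h3 g d hg
          simp only [rsize]
          omega
  | esL z u hz h ih =>
      intro heq
      obtain h1 | ⟨h1, h2⟩ := ih heq
      · left; simp only [nsize]; omega
      · right
        refine ⟨by simp only [nsize]; omega, ?_⟩
        obtain h2 | ⟨h2, h3⟩ := h2
        · left; intro k; simp only [dsize]; have := h2 k; omega
        · right
          refine ⟨fun k => by simp only [dsize]; have := h2 k; omega, ?_⟩
          intro g d hg
          have hbound : ∀ w, (fun w => if w = z then d+1 else g w) w ≤ d + 1 := by
            intro w
            by_cases hw : w = z <;> simp [hw]
            exact le_trans (hg w) (Nat.le_succ d)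
          have := h3 _ (d+1) hbound
          simp only [rsize]
          omega
  | esR t z h ih =>
      intro heq
      obtain h1 | ⟨h1, h2⟩ := ih heq
      · left; simp only [nsize]; omega
      · right
        refine ⟨by simp only [nsize]; omega, ?_⟩
        obtain h2 | ⟨h2, h3⟩ := h2
        · left; intro k; simp only [dsize]; have := h2 (k+1); omega
        · right
          refine ⟨fun k => by simp only [dsize]; have := h2 (k+1); omega, ?_⟩
          intro g d hg
          have := h3 g (d+1) (fun w => le_trans (hg w) (Nat.le_succ d))
          simp only [rsize]
          omega

/-- the `lsv` relation of lcbv is terminating: there is no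
infinite reduction sequence `t0 →lsv t1 →lsv t2 →lsv ⋯`. -/
theorem LStep_lsv_terminating :
    ¬ ∃ f : ℕ → Term, ∀ n : ℕ, LStep .lsv (f n) (f (n + 1)) := by
  rintro ⟨f, hf⟩
  have wf : WellFounded (Prod.Lex (· < ·) (Prod.Lex (· < ·) ((· < ·) : ℕ → ℕ → Prop))) :=
    (Nat.lt_wfRel.wf).prod_lex ((Nat.lt_wfRel.wf).prod_lex Nat.lt_wfRel.wf)
  set T : Term → ℕ × ℕ × ℕ := fun t => (nsize t, dsize 0 t, rsize (fun _ => 0) 0 t) with hT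
  have step : ∀ n, Prod.Lex (· < ·) (Prod.Lex (· < ·) ((· < ·) : ℕ → ℕ → Prop)) (T (f (n+1))) (T (f n)) := by
    intro n
    obtain h1 | ⟨h1, h2⟩ := lsv_dec (hf n) rfl
    · exact Prod.Lex.left _ _ h1
    · simp only [hT]
      rw [h1]
      refine Prod.Lex.right _ ?_
      obtain h2 | ⟨h2, h3⟩ := h2
      · exact Prod.Lex.left _ _ (h2 0)
      · rw [h2 0]
        exact Prod.Lex.right _ (h3 (fun _ => 0) 0 (fun _ => Nat.le_refl 0))
  exact (wf.induction (C := fun p => ∀ n, T (f n) = p → False) (T (f 0))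
    (fun p IH n hp => IH (T (f (n+1))) (hp ▸ step n) (n+1) rfl)) 0 rfl
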